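/- Let V : ℕ → ℤ[T,T⁻¹] satisfy the Jones recurrence V(m+2) = (T³ − T)·V(m+1) + T⁴·V(m) for all m. Suppose V(0) ≠ 0 and the pair (V(0), V(1)) is semistable, i.e. deg V(1) ≤ deg V(0). Then: (i) for every m ≥ 1, the pair (V(m), V(m+1)) is stable; (ii) for every m ≥ 2, deg V(m) = deg V(0) + 3·m − 2; (iii) for every m ≥ 2, the leading coefficient of V(m) equals the leading coefficient of V(0). -/

import Mathlib

/-- The degree of a Laurent polynomial `f`, viewed as a finitely supported function
`ℤ → ℤ`: the maximum of its support in `WithBot ℤ` (so `jdeg 0 = ⊥`). -/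
noncomputable def jdeg (f : LaurentPolynomial ℤ) : WithBot ℤ :=
  (AddMonoidAlgebra.coeff f).support.max

/-- The leading coefficient of a Laurent polynomial: its coefficient at `jdeg f`
(for `f ≠ 0`; by convention `jcoeff 0 = 0`). -/
noncomputable def jcoeff (f : LaurentPolynomial ℤ) : ℤ :=
  (AddMonoidAlgebra.coeff f) (((AddMonoidAlgebra.coeff f).support.max).unbotD 0)

/-!
Split `V (m + 2) = T³·V (m + 1) + (T⁴·V m − T·V (m + 1))`. If the pair `(V m, V (m + 1))` is
stable, the bracket has degree below `3 + deg V (m + 1)`, so `V (m + 2)` has degree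
`deg V (m + 1) + 3` and the same leading coefficient, and `(V (m + 1), V (m + 2))` is stable
again. For a semistable pair `(V 0, V 1)` the dominant term of `V 2` is `T⁴·V 0` instead, so
`deg V 2 = deg V 0 + 4`, `V 2` inherits the leading coefficient of `V 0`, and `(V 1, V 2)` is
stable, after which the stable case takes over.
-/

open LaurentPolynomial AddMonoidAlgebra

lemma WithBot.coe_add_lt_coe_add {α : Type*} [Add α] [LT α] [AddRightStrictMono α]
    {x : WithBot α} (hx : x ≠ ⊥) {m n : α} (h : m < n) : (m : WithBot α) + x < n + x :=
  WithBot.add_lt_add_right hx (WithBot.coe_lt_coe.mpr h)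

lemma jdeg_eq_supDegree (f : LaurentPolynomial ℤ) :
    jdeg f = f.supDegree ((↑) : ℤ → WithBot ℤ) :=
  Finset.max_eq_sup_withBot _

lemma jdeg_eq_bot {f : LaurentPolynomial ℤ} : jdeg f = ⊥ ↔ f = 0 :=
  degree_eq_bot_iff

lemma jcoeff_of_jdeg_eq {f : LaurentPolynomial ℤ} {d : ℤ} (h : jdeg f = d) :
    jcoeff f = f.coeff d := by
  change f.coeff ((jdeg f).unbotD 0) = _
  rw [h, WithBot.unbotD_coe]

lemma jdeg_add_eq_right_of_lt {p q : LaurentPolynomial ℤ} (h : jdeg p < jdeg q) :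
    jdeg (p + q) = jdeg q := by
  rw [jdeg_eq_supDegree, jdeg_eq_supDegree] at h ⊢
  exact supDegree_add_eq_right h

lemma jcoeff_add_eq_right_of_lt {p q : LaurentPolynomial ℤ} (h : jdeg p < jdeg q) :
    jcoeff (p + q) = jcoeff q := by
  obtain ⟨d, hd⟩ := WithBot.ne_bot_iff_exists.mp (bot_le.trans_lt h).ne'
  have hp : p.coeff d = 0 :=
    Finsupp.notMem_support_iff.mp (Finset.notMem_of_max_lt_coe (hd ▸ h))
  rw [jcoeff_of_jdeg_eq (hd ▸ jdeg_add_eq_right_of_lt h), jcoeff_of_jdeg_eq hd.symm, coeff_add,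
    Finsupp.add_apply, hp, zero_add]

lemma jdeg_sub_le (p q : LaurentPolynomial ℤ) : jdeg (p - q) ≤ jdeg p ⊔ jdeg q := by
  simp only [jdeg_eq_supDegree]
  exact supDegree_sub_le

lemma jdeg_T_mul_le (n : ℤ) (f : LaurentPolynomial ℤ) : jdeg (T n * f) ≤ n + jdeg f := by
  simp only [jdeg_eq_supDegree]
  refine (supDegree_mul_le fun _ _ ↦ WithBot.coe_add ..).trans_eq ?_
  rw [T, supDegree_single_ne_zero _ one_ne_zero]

lemma jdeg_T_mul (n : ℤ) (f : LaurentPolynomial ℤ) : jdeg (T n * f) = n + jdeg f := by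
  refine (jdeg_T_mul_le n f).antisymm ?_
  calc (n : WithBot ℤ) + jdeg f = n + jdeg (T (-n) * (T n * f)) := by
        rw [← mul_assoc, ← T_add, neg_add_cancel, T_zero, one_mul]
    _ ≤ n + (↑(-n) + jdeg (T n * f)) := by grw [jdeg_T_mul_le]
    _ = jdeg (T n * f) := by
        rw [← add_assoc, ← WithBot.coe_add, add_neg_cancel, WithBot.coe_zero, zero_add]

lemma coeff_T_mul_add (n : ℤ) (f : LaurentPolynomial ℤ) (a : ℤ) :
    (T n * f).coeff (n + a) = f.coeff a := by
  rw [T, coeff_single_mul_apply, one_mul, neg_add_cancel_left]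

lemma jcoeff_T_mul (n : ℤ) (f : LaurentPolynomial ℤ) : jcoeff (T n * f) = jcoeff f := by
  obtain rfl | hf := eq_or_ne f 0
  · rw [mul_zero]
  obtain ⟨d, hd⟩ := WithBot.ne_bot_iff_exists.mp (mt jdeg_eq_bot.mp hf)
  rw [jcoeff_of_jdeg_eq hd.symm, jcoeff_of_jdeg_eq (d := n + d), coeff_T_mul_add]
  rw [jdeg_T_mul, ← hd, WithBot.coe_add]

/-- Mind the argument order: the Jones recurrence reads
`V (m + 2) = jonesNext (V m) (V (m + 1))`. -/
noncomputable def jonesNext (a b : LaurentPolynomial ℤ) : LaurentPolynomial ℤ :=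
  (T 3 - T 1) * b + T 4 * a

def JonesRecurrence (V : ℕ → LaurentPolynomial ℤ) : Prop :=
  ∀ m, V (m + 2) = jonesNext (V m) (V (m + 1))

lemma JonesRecurrence.shift {V : ℕ → LaurentPolynomial ℤ} (hV : JonesRecurrence V) :
    JonesRecurrence (fun m ↦ V (m + 1)) :=
  fun m ↦ hV (m + 1)

def IsStable (a b : LaurentPolynomial ℤ) : Prop :=
  1 + jdeg a < jdeg b

lemma IsStable.jdeg_jcoeff_jonesNext {a b : LaurentPolynomial ℤ} (h : IsStable a b) :
    jdeg (jonesNext a b) = 3 + jdeg b ∧ jcoeff (jonesNext a b) = jcoeff b := by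
  have hb : jdeg b ≠ ⊥ := (bot_le.trans_lt h).ne'
  have hsplit : jonesNext a b = (T 4 * a - T 1 * b) + T 3 * b := by rw [jonesNext]; ring
  have hlower : jdeg (T 4 * a - T 1 * b) < jdeg (T 3 * b) := by
    refine (jdeg_sub_le _ _).trans_lt (sup_lt_iff.mpr ⟨?_, ?_⟩) <;> rw [jdeg_T_mul, jdeg_T_mul]
    · calc ((4 : ℤ) : WithBot ℤ) + jdeg a = (3 : ℤ) + (1 + jdeg a) := by
            rw [← add_assoc]; rfl
        _ < (3 : ℤ) + jdeg b := WithBot.add_lt_add_left WithBot.coe_ne_bot h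
    · exact WithBot.coe_add_lt_coe_add hb (by norm_num)
  rw [hsplit, jdeg_add_eq_right_of_lt hlower, jcoeff_add_eq_right_of_lt hlower, jdeg_T_mul,
    jcoeff_T_mul]
  exact ⟨rfl, rfl⟩

lemma jdeg_jcoeff_jonesNext_of_jdeg_le {a b : LaurentPolynomial ℤ} (ha : a ≠ 0)
    (h : jdeg b ≤ jdeg a) :
    jdeg (jonesNext a b) = 4 + jdeg a ∧ jcoeff (jonesNext a b) = jcoeff a := by
  have ha' : jdeg a ≠ ⊥ := mt jdeg_eq_bot.mp ha
  have hsplit : jonesNext a b = (T 3 * b - T 1 * b) + T 4 * a := by rw [jonesNext]; ring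
  have hlower : jdeg (T 3 * b - T 1 * b) < jdeg (T 4 * a) := by
    refine (jdeg_sub_le _ _).trans_lt (sup_lt_iff.mpr ⟨?_, ?_⟩) <;> rw [jdeg_T_mul, jdeg_T_mul]
    all_goals
      exact (add_le_add_right h _).trans_lt (WithBot.coe_add_lt_coe_add ha' (n := 4) (by norm_num))
  rw [hsplit, jdeg_add_eq_right_of_lt hlower, jcoeff_add_eq_right_of_lt hlower, jdeg_T_mul,
    jcoeff_T_mul]
  exact ⟨rfl, rfl⟩

lemma IsStable.jonesNext {a b : LaurentPolynomial ℤ} (h : IsStable a b) :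
    IsStable b (jonesNext a b) := by
  rw [IsStable, h.jdeg_jcoeff_jonesNext.1]
  exact WithBot.coe_add_lt_coe_add (bot_le.trans_lt h).ne' (by norm_num)

lemma isStable_jonesNext_of_jdeg_le {a b : LaurentPolynomial ℤ} (ha : a ≠ 0)
    (h : jdeg b ≤ jdeg a) : IsStable b (jonesNext a b) := by
  rw [IsStable, (jdeg_jcoeff_jonesNext_of_jdeg_le ha h).1]
  exact (add_le_add_right h _).trans_lt
    (WithBot.coe_add_lt_coe_add (mt jdeg_eq_bot.mp ha) (by norm_num))

namespace JonesRecurrence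

variable {V : ℕ → LaurentPolynomial ℤ}

lemma isStable (hV : JonesRecurrence V) (h : IsStable (V 0) (V 1)) (m : ℕ) :
    IsStable (V m) (V (m + 1)) := by
  induction m with
  | zero => exact h
  | succ m ih => exact hV m ▸ ih.jonesNext

lemma jdeg_succ (hV : JonesRecurrence V) (h : IsStable (V 0) (V 1)) (m : ℕ) :
    jdeg (V (m + 1)) = (3 * m : ℤ) + jdeg (V 1) := by
  induction m with
  | zero => simp
  | succ m ih =>
    rw [hV m, (hV.isStable h m).jdeg_jcoeff_jonesNext.1, ih, ← add_assoc, ← WithBot.coe_ofNat,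
      ← WithBot.coe_add]
    congr 2
    push_cast
    ring

lemma jcoeff_succ (hV : JonesRecurrence V) (h : IsStable (V 0) (V 1)) (m : ℕ) :
    jcoeff (V (m + 1)) = jcoeff (V 1) := by
  induction m with
  | zero => rfl
  | succ m ih => rw [hV m, (hV.isStable h m).jdeg_jcoeff_jonesNext.2, ih]

end JonesRecurrence

open LaurentPolynomial in
/-- **Proposition 3.3** (semistable case). If `V` satisfies the Jones recurrence,
`V 0 ≠ 0`, and the pair `(V 0, V 1)` is semistable (`deg V 1 ≤ deg V 0`), then every
pair `(V m, V (m+1))` with `m ≥ 1` is stable, `deg V m = deg V 0 + 3m − 2` for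
`m ≥ 2`, and the leading coefficient of `V m` equals that of `V 0` for `m ≥ 2`. -/
theorem jones_semistable_case (V : ℕ → LaurentPolynomial ℤ)
    (hV : ∀ m : ℕ, V (m + 2) = (T 3 - T 1) * V (m + 1) + T 4 * V m)
    (h0 : V 0 ≠ 0)
    (hsemi : jdeg (V 1) ≤ jdeg (V 0)) :
    (∀ m : ℕ, 1 ≤ m → 1 + jdeg (V m) < jdeg (V (m + 1))) ∧
    (∀ m : ℕ, 2 ≤ m → jdeg (V m) = jdeg (V 0) + ((3 * (m : ℤ) - 2 : ℤ) : WithBot ℤ)) ∧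
    (∀ m : ℕ, 2 ≤ m → jcoeff (V m) = jcoeff (V 0)) := by
  replace hV : JonesRecurrence V := hV
  have hV₂ : jdeg (V 2) = 4 + jdeg (V 0) ∧ jcoeff (V 2) = jcoeff (V 0) :=
    hV 0 ▸ jdeg_jcoeff_jonesNext_of_jdeg_le h0 hsemi
  have hW₀ : IsStable (V 1) (V 2) := hV 0 ▸ isStable_jonesNext_of_jdeg_le h0 hsemi
  have hW := hV.shift
  refine ⟨fun m hm ↦ ?_, fun m hm ↦ ?_, fun m hm ↦ ?_⟩ <;>
    obtain ⟨k, rfl⟩ := Nat.exists_eq_add_of_le' hm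
  · exact hW.isStable hW₀ k
  · rw [hW.jdeg_succ hW₀ k, hV₂.1, ← add_assoc, ← WithBot.coe_ofNat, ← WithBot.coe_add,
      add_comm]
    congr 2
    push_cast
    ring
  · rw [hW.jcoeff_succ hW₀ k, hV₂.2]
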